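/- arXiv:2309.11772 — 2 statements merged into one kernel-verified Lean document; each statement's English description precedes it below -/
import Mathlib

section
/- Let Z ~ N(μ, σ²) with σ > 0. For fixed y ∈ ℝ, the continuous ranked probability score satisfies CRPS = ∫_ℝ (Φ((t-μ)/σ) - 1{t ≥ y})² dt = σ[ (y-μ)/σ · (2Φ((y-μ)/σ) - 1) + 2φ((y-μ)/σ) - 1/√π ], where φ and Φ are the standard normal density and distribution function. -/
noncomputable def stdPDF (t : ℝ) : ℝ := (Real.sqrt (2 * Real.pi))⁻¹ * Real.exp (-t^2/2)

noncomputable def stdCDF (t : ℝ) : ℝ := ∫ s in Set.Iic t, stdPDF s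

/-!
Substituting `s = (t - μ) / σ` and writing `z = (y - μ) / σ`, the integrand is `Φ(s)²` for `s < z`
and `(1 - Φ(s))² = Φ(-s)²` for `s ≥ z`, so the score is `σ (G(z) + G(-z))` with
`G(z) = ∫_{-∞}^z Φ²`. Using `√2 φ(√2 s) = 2 √π φ(s)²` one checks that
`G(s) = s Φ(s)² + 2 φ(s) Φ(s) - Φ(√2 s) / √π` has derivative `Φ²`; it vanishes at `-∞` because
`Φ(s) ≤ φ(s)` for `s ≤ -1`. In `G(z) + G(-z)` the symmetry `Φ(-s) = 1 - Φ(s)` leaves exactly the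
closed form.
-/

open Real MeasureTheory ProbabilityTheory Set Filter Topology

lemma stdPDF_eq_gaussianPDFReal : stdPDF = gaussianPDFReal 0 1 := by
  ext t
  simp [stdPDF, gaussianPDFReal]

lemma stdPDF_nonneg (t : ℝ) : 0 ≤ stdPDF t := by
  unfold stdPDF
  positivity

lemma stdPDF_neg (t : ℝ) : stdPDF (-t) = stdPDF t := by
  simp [stdPDF]

lemma continuous_stdPDF : Continuous stdPDF := by
  unfold stdPDF
  fun_prop

lemma integrable_stdPDF : Integrable stdPDF :=
  stdPDF_eq_gaussianPDFReal ▸ integrable_gaussianPDFReal 0 1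

lemma integral_stdPDF : ∫ t, stdPDF t = 1 :=
  stdPDF_eq_gaussianPDFReal ▸ integral_gaussianPDFReal_eq_one 0 one_ne_zero

lemma hasDerivAt_stdPDF (t : ℝ) : HasDerivAt stdPDF (-t * stdPDF t) t := by
  have hq : HasDerivAt (fun s : ℝ => -s ^ 2 / 2) (-t) t :=
    ((hasDerivAt_pow 2 t).neg.div_const 2).congr_deriv (by ring)
  exact (hq.exp.const_mul (√(2 * π))⁻¹).congr_deriv (by unfold stdPDF; ring)

lemma sqrt_two_mul_stdPDF_sqrt_two_mul (s : ℝ) :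
    √2 * stdPDF (√2 * s) = 2 * √π * stdPDF s ^ 2 := by
  have h2 : √2 ^ 2 = 2 := sq_sqrt zero_le_two
  have hexp : exp (-(√2 * s) ^ 2 / 2) = exp (-s ^ 2 / 2) ^ 2 := by
    rw [← exp_nat_mul, mul_pow, h2]
    ring_nf
  unfold stdPDF
  rw [hexp, sqrt_mul zero_le_two]
  field_simp
  exact h2

lemma tendsto_stdPDF_atBot : Tendsto stdPDF atBot (𝓝 0) := by
  have h := (tendsto_rpow_abs_mul_exp_neg_mul_sq_cocompact one_half_pos 0).const_mul
    (√(2 * π))⁻¹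
  rw [mul_zero] at h
  refine (h.mono_left atBot_le_cocompact).congr fun s => ?_
  simp [stdPDF, div_eq_inv_mul]

lemma tendsto_mul_stdPDF_sq_atBot : Tendsto (fun s => s * stdPDF s ^ 2) atBot (𝓝 0) := by
  have h := (tendsto_rpow_abs_mul_exp_neg_mul_sq_cocompact one_pos 1).const_mul
    ((√(2 * π))⁻¹ ^ 2)
  rw [mul_zero] at h
  rw [tendsto_zero_iff_norm_tendsto_zero]
  refine (h.mono_left atBot_le_cocompact).congr fun s => ?_
  simp [stdPDF, mul_pow, ← exp_nat_mul]
  ring_nf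

lemma stdCDF_eq_cdf : stdCDF = cdf (gaussianReal 0 1) := by
  ext x
  rw [cdf_eq_real, measureReal_def, gaussianReal_apply_eq_integral _ one_ne_zero,
    ENNReal.toReal_ofReal (setIntegral_nonneg measurableSet_Iic
      fun s _ => gaussianPDFReal_nonneg 0 1 s), stdCDF, stdPDF_eq_gaussianPDFReal]

lemma stdCDF_nonneg (t : ℝ) : 0 ≤ stdCDF t := stdCDF_eq_cdf ▸ cdf_nonneg _ t

lemma stdCDF_le_one (t : ℝ) : stdCDF t ≤ 1 := stdCDF_eq_cdf ▸ cdf_le_one _ t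

lemma tendsto_stdCDF_atBot : Tendsto stdCDF atBot (𝓝 0) :=
  stdCDF_eq_cdf ▸ tendsto_cdf_atBot _

lemma hasDerivAt_stdCDF (t : ℝ) : HasDerivAt stdCDF (stdPDF t) t := by
  have hshift : stdCDF = fun u => stdCDF 0 + ∫ s in (0 : ℝ)..u, stdPDF s := by
    ext u
    rw [← intervalIntegral.integral_Iic_sub_Iic integrable_stdPDF.integrableOn
      integrable_stdPDF.integrableOn, stdCDF, stdCDF, add_sub_cancel]
  rw [hshift]
  exact (intervalIntegral.integral_hasDerivAt_right integrable_stdPDF.intervalIntegrable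
    (continuous_stdPDF.stronglyMeasurableAtFilter _ _) continuous_stdPDF.continuousAt).const_add _

lemma continuous_stdCDF : Continuous stdCDF :=
  continuous_iff_continuousAt.2 fun t => (hasDerivAt_stdCDF t).continuousAt

lemma stdCDF_neg (t : ℝ) : stdCDF (-t) = 1 - stdCDF t := by
  have htail : stdCDF (-t) = ∫ s in Ioi t, stdPDF s := by
    simpa only [stdCDF, stdPDF_neg, neg_neg] using integral_comp_neg_Iic (-t) stdPDF
  rw [htail, ← integral_stdPDF, ← intervalIntegral.integral_Iic_add_Ioi
    integrable_stdPDF.integrableOn integrable_stdPDF.integrableOn, stdCDF, add_sub_cancel_left]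

/-- `φ - Φ` has derivative `(-u - 1) φ(u) ≥ 0` on `(-∞, -1]` and tends to `0` at `-∞`. -/
lemma stdCDF_le_stdPDF {s : ℝ} (hs : s ≤ -1) : stdCDF s ≤ stdPDF s := by
  have hmono : MonotoneOn (fun u => stdPDF u - stdCDF u) (Iic (-1)) := by
    refine monotoneOn_of_hasDerivWithinAt_nonneg (convex_Iic _)
      (continuous_stdPDF.sub continuous_stdCDF).continuousOn
      (fun u _ => ((hasDerivAt_stdPDF u).sub (hasDerivAt_stdCDF u)).hasDerivWithinAt) ?_
    intro u hu
    rw [interior_Iic] at hu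
    nlinarith [stdPDF_nonneg u, hu.out]
  have hlim : Tendsto (fun u => stdPDF u - stdCDF u) atBot (𝓝 0) := by
    simpa using tendsto_stdPDF_atBot.sub tendsto_stdCDF_atBot
  have hpos : 0 ≤ stdPDF s - stdCDF s :=
    le_of_tendsto hlim (by
      filter_upwards [Iic_mem_atBot s] with u hu using hmono (hu.out.trans hs) hs hu)
  linarith

noncomputable def stdCDFSqPrimitive (s : ℝ) : ℝ :=
  s * stdCDF s ^ 2 + 2 * stdPDF s * stdCDF s - stdCDF (√2 * s) / √π

lemma hasDerivAt_stdCDFSqPrimitive (s : ℝ) :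
    HasDerivAt stdCDFSqPrimitive (stdCDF s ^ 2) s := by
  have hΦ := hasDerivAt_stdCDF s
  have hΦ2 : HasDerivAt (fun u => stdCDF (√2 * u)) (stdPDF (√2 * s) * √2) s :=
    (hasDerivAt_stdCDF (√2 * s)).comp s
      ((hasDerivAt_id s).const_mul √2 |>.congr_deriv (mul_one _))
  have h := (((hasDerivAt_id s).mul (hΦ.pow 2)).add
    (((hasDerivAt_stdPDF s).const_mul 2).mul hΦ)).sub (hΦ2.div_const √π)
  refine h.congr_deriv ?_
  have hπ : √π ≠ 0 := (sqrt_pos.2 pi_pos).ne'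
  rw [mul_comm (stdPDF _), sqrt_two_mul_stdPDF_sqrt_two_mul]
  simp only [id, Pi.pow_apply]
  field_simp
  ring

lemma tendsto_stdCDFSqPrimitive_atBot : Tendsto stdCDFSqPrimitive atBot (𝓝 0) := by
  have h₁ : Tendsto (fun s => s * stdCDF s ^ 2) atBot (𝓝 0) := by
    refine tendsto_of_tendsto_of_tendsto_of_le_of_le' tendsto_mul_stdPDF_sq_atBot
      tendsto_const_nhds ?_ ?_
    · filter_upwards [Iic_mem_atBot (-1)] with s hs
      exact mul_le_mul_of_nonpos_left
        (pow_le_pow_left₀ (stdCDF_nonneg s) (stdCDF_le_stdPDF hs) 2) (by linarith [hs.out])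
    · filter_upwards [Iic_mem_atBot 0] with s hs
      exact mul_nonpos_of_nonpos_of_nonneg hs (sq_nonneg _)
  have h₂ : Tendsto (fun s => stdCDF (√2 * s)) atBot (𝓝 0) :=
    tendsto_stdCDF_atBot.comp (tendsto_id.const_mul_atBot (sqrt_pos.2 two_pos))
  unfold stdCDFSqPrimitive
  simpa using (h₁.add ((tendsto_stdPDF_atBot.const_mul 2).mul tendsto_stdCDF_atBot)).sub
    (h₂.div_const √π)

lemma integrableOn_stdCDF_sq_Iic (z : ℝ) : IntegrableOn (fun s => stdCDF s ^ 2) (Iic z) := by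
  have hcont : Continuous fun s => stdCDF s ^ 2 := continuous_stdCDF.pow 2
  have htail : IntegrableOn (fun s => stdCDF s ^ 2) (Iic (-1)) := by
    refine integrable_stdPDF.integrableOn.mono' hcont.aestronglyMeasurable.restrict
      ((ae_restrict_iff' measurableSet_Iic).2 (ae_of_all _ fun s hs => ?_))
    rw [norm_pow, Real.norm_of_nonneg (stdCDF_nonneg s)]
    nlinarith [stdCDF_nonneg s, stdCDF_le_one s, stdCDF_le_stdPDF hs]
  refine (htail.union (hcont.integrableOn_Icc (a := -1) (b := z))).mono_set fun s hs => ?_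
  rcases le_or_gt s (-1) with h | h
  exacts [Or.inl h, Or.inr ⟨h.le, hs⟩]

lemma integral_Iic_stdCDF_sq (z : ℝ) : ∫ s in Iic z, stdCDF s ^ 2 = stdCDFSqPrimitive z := by
  simpa using integral_Iic_of_hasDerivAt_of_tendsto' (fun s _ => hasDerivAt_stdCDFSqPrimitive s)
    (integrableOn_stdCDF_sq_Iic z) tendsto_stdCDFSqPrimitive_atBot

lemma integral_sq_stdCDF_sub_step (z : ℝ) :
    ∫ s, (stdCDF s - if z ≤ s then 1 else 0) ^ 2 =
      z * (2 * stdCDF z - 1) + 2 * stdPDF z - 1 / √π := by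
  set F : ℝ → ℝ := fun s => stdCDF s ^ 2
  have hsplit : (fun s => (stdCDF s - if z ≤ s then 1 else 0) ^ 2) =
      fun s => (Iio z).indicator F s + (Iic (-z)).indicator F (-s) := by
    ext s
    by_cases h : z ≤ s
    · simp only [h, ↓reduceIte, mem_Iio, not_lt.2 h, not_false_eq_true, indicator_of_notMem,
        mem_Iic, neg_le_neg_iff, indicator_of_mem, stdCDF_neg, zero_add, F]
      ring
    · simp [F, h, lt_of_not_ge h]
  have hint : Integrable ((Iio z).indicator F) :=
    (integrable_indicator_iff measurableSet_Iio).2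
      ((integrableOn_stdCDF_sq_Iic z).mono_set Iio_subset_Iic_self)
  have hint' : Integrable ((Iic (-z)).indicator F) :=
    (integrable_indicator_iff measurableSet_Iic).2 (integrableOn_stdCDF_sq_Iic (-z))
  rw [hsplit, integral_add hint hint'.comp_neg, integral_neg_eq_self,
    integral_indicator measurableSet_Iio, integral_indicator measurableSet_Iic,
    ← integral_Iic_eq_integral_Iio, integral_Iic_stdCDF_sq, integral_Iic_stdCDF_sq]
  simp only [stdCDFSqPrimitive, stdPDF_neg, mul_neg, stdCDF_neg]
  ring

lemma integral_comp_sub_div {E : Type*} [NormedAddCommGroup E] [NormedSpace ℝ E]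
    (f : ℝ → E) (μ σ : ℝ) : ∫ t, f ((t - μ) / σ) = |σ| • ∫ s, f s := by
  rw [integral_sub_right_eq_self (fun t => f (t / σ)) μ, Measure.integral_comp_div]

theorem crps_gaussian_closed_form (μ σ y : ℝ) (hσ : 0 < σ) :
    (∫ t : ℝ, (stdCDF ((t - μ)/σ) - (if y ≤ t then (1:ℝ) else 0))^2) =
      σ * ((y - μ)/σ * (2 * stdCDF ((y - μ)/σ) - 1) + 2 * stdPDF ((y - μ)/σ)
        - 1 / Real.sqrt Real.pi) := by
  have hstep (t : ℝ) : y ≤ t ↔ (y - μ) / σ ≤ (t - μ) / σ := by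
    rw [div_le_div_iff_of_pos_right hσ, sub_le_sub_iff_right]
  simp_rw [hstep]
  rw [integral_comp_sub_div (fun s => (stdCDF s - if (y - μ) / σ ≤ s then 1 else 0) ^ 2),
    integral_sq_stdCDF_sub_step, abs_of_pos hσ, smul_eq_mul]
end

section
/- Let Z ~ N(μ, σ²) with σ² ≥ 0 and θ > 0, and let y₁, …, yₙ ∈ ℝ and r₁, …, rₙ ∈ ℝ. Define m = ∑ᵢ rᵢ E[exp(-(yᵢ - Z)²/θ)]. Then E[(∑ᵢ rᵢ exp(-(yᵢ - Z)²/θ))²] = ∑_{i,k} rᵢ rₖ (1 + 4σ²/θ)^(-1/2) exp(-((yᵢ+yₖ)/2 - μ)²/(θ/2 + 2σ²) - (yᵢ - yₖ)²/(2θ)), and consequently Var(∑ᵢ rᵢ exp(-(yᵢ - Z)²/θ)) equals this double sum minus m². -/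
/-!
Two squared-exponential kernels multiply to one of half the width, centred at the midpoint:
`exp(-(a-z)²/θ) exp(-(b-z)²/θ) = exp(-(a-b)²/(2θ)) exp(-(z-(a+b)/2)²/(θ/2))`. Completing the
square, a Gaussian density times `exp(-(z-c)²/s)` is a multiple of another Gaussian density, so
`E exp(-(Z-c)²/s) = (1 + 2σ²/s)^(-1/2) exp(-(c-μ)²/(s+2σ²))`. Expanding the square of the sum
bilinearly gives the second moment, and the variance is the second moment minus the squared mean.
-/

open MeasureTheory ProbabilityTheory
open scoped NNReal

theorem integral_sq_finsetSum_const_mul {Ω ι : Type*} [MeasurableSpace Ω] {P : Measure Ω} (s : Finset ι) (r : ι → ℝ) {f : ι → Ω → ℝ}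
    (hf : ∀ i ∈ s, MemLp (f i) 2 P) :
    ∫ ω, (∑ i ∈ s, r i * f i ω) ^ 2 ∂P = ∑ i ∈ s, ∑ k ∈ s, r i * r k * ∫ ω, f i ω * f k ω ∂P := by
  have hprod : ∀ i ∈ s, ∀ k ∈ s, Integrable (fun ω => f i ω * f k ω) P :=
    fun i hi k hk => (hf i hi).integrable_mul (hf k hk)
  have hexpand : ∀ ω, (∑ i ∈ s, r i * f i ω) ^ 2 =
      ∑ i ∈ s, ∑ k ∈ s, r i * r k * (f i ω * f k ω) := fun ω => by
    rw [sq, Finset.sum_mul_sum]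
    exact Finset.sum_congr rfl fun i _ => Finset.sum_congr rfl fun k _ => by ring
  simp_rw [hexpand]
  rw [integral_finsetSum _ fun i hi =>
    integrable_finsetSum _ fun k hk => (hprod i hi k hk).const_mul _]
  refine Finset.sum_congr rfl fun i hi => ?_
  rw [integral_finsetSum _ fun k hk => (hprod i hi k hk).const_mul _]
  exact Finset.sum_congr rfl fun k _ => integral_const_mul _ _

theorem memLp_exp_neg_sq_div {P : Measure ℝ} [IsFiniteMeasure P] {θ : ℝ} (hθ : 0 ≤ θ)
    (y : ℝ) (p : ENNReal) : MemLp (fun z => Real.exp (-(y - z) ^ 2 / θ)) p P := by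
  refine MemLp.of_bound (by fun_prop : Continuous _).aestronglyMeasurable 1 (ae_of_all _ fun z => ?_)
  rw [Real.norm_eq_abs, Real.abs_exp, Real.exp_le_one_iff]
  exact div_nonpos_of_nonpos_of_nonneg (neg_nonpos.mpr (sq_nonneg _)) hθ

theorem exp_neg_sq_div_mul_exp_neg_sq_div {θ : ℝ} (hθ : θ ≠ 0) (a b z : ℝ) :
    Real.exp (-(a - z) ^ 2 / θ) * Real.exp (-(b - z) ^ 2 / θ) =
      Real.exp (-(a - b) ^ 2 / (2 * θ)) * Real.exp (-(z - (a + b) / 2) ^ 2 / (θ / 2)) := by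
  rw [← Real.exp_add, ← Real.exp_add]
  congr 1
  field_simp
  ring

theorem gaussianPDFReal_mul_exp_neg_sq_div (μ : ℝ) {v : ℝ≥0} (hv : v ≠ 0) {s : ℝ} (hs : 0 < s)
    (c z : ℝ) :
    gaussianPDFReal μ v z * Real.exp (-(z - c) ^ 2 / s) =
      √(s / (s + 2 * v)) * Real.exp (-(c - μ) ^ 2 / (s + 2 * v)) *
        gaussianPDFReal ((2 * v * c + s * μ) / (s + 2 * v)) (v * s / (s + 2 * v)).toNNReal z := by
  simp only [gaussianPDFReal, Real.coe_toNNReal _ (by positivity : 0 ≤ v * s / (s + 2 * v))]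
  have hsqrt : √(2 * Real.pi * (v * s / (s + 2 * v))) = √(2 * Real.pi * v) * √(s / (s + 2 * v)) := by
    rw [← Real.sqrt_mul (by positivity)]
    ring_nf
  have hexp : -(z - μ) ^ 2 / (2 * v) + -(z - c) ^ 2 / s =
      -(c - μ) ^ 2 / (s + 2 * v) + -(z - (2 * v * c + s * μ) / (s + 2 * v)) ^ 2 /
        (2 * (v * s / (s + 2 * v))) := by
    field_simp
    ring
  rw [hsqrt, mul_assoc, ← Real.exp_add, hexp, Real.exp_add, mul_inv]
  field_simp

theorem integral_exp_neg_sq_div_gaussianReal (μ : ℝ) (v : ℝ≥0) {s : ℝ} (hs : 0 < s) (c : ℝ) :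
    ∫ z, Real.exp (-(z - c) ^ 2 / s) ∂(gaussianReal μ v) =
      (1 + 2 * v / s) ^ (-(1:ℝ) / 2) * Real.exp (-(c - μ) ^ 2 / (s + 2 * v)) := by
  rcases eq_or_ne v 0 with rfl | hv
  · simp only [gaussianReal_zero_var, integral_dirac, NNReal.coe_zero, mul_zero, zero_div,
      add_zero, Real.one_rpow, one_mul]
    rw [← neg_sub c μ, neg_sq]
  have hconst : (1 + 2 * v / s) ^ (-(1:ℝ) / 2) = √(s / (s + 2 * v)) := by
    rw [Real.sqrt_eq_rpow, neg_div, Real.rpow_neg (by positivity), ← Real.inv_rpow (by positivity)]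
    congr 1
    field_simp
  have hw : (v * s / (s + 2 * v)).toNNReal ≠ 0 := (Real.toNNReal_pos.mpr (by positivity)).ne'
  simp_rw [integral_gaussianReal_eq_integral_smul hv, smul_eq_mul,
    gaussianPDFReal_mul_exp_neg_sq_div μ hv hs, integral_const_mul,
    integral_gaussianPDFReal_eq_one _ hw, hconst, mul_one]

theorem integral_exp_neg_sq_div_mul_exp_neg_sq_div_gaussianReal (μ : ℝ) (v : ℝ≥0) {θ : ℝ}
    (hθ : 0 < θ) (a b : ℝ) :
    ∫ z, Real.exp (-(a - z) ^ 2 / θ) * Real.exp (-(b - z) ^ 2 / θ) ∂(gaussianReal μ v) =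
      (1 + 4 * v / θ) ^ (-(1:ℝ) / 2) *
        Real.exp (-((a + b) / 2 - μ) ^ 2 / (θ / 2 + 2 * v) - (a - b) ^ 2 / (2 * θ)) := by
  simp_rw [exp_neg_sq_div_mul_exp_neg_sq_div hθ.ne', integral_const_mul,
    integral_exp_neg_sq_div_gaussianReal μ v (half_pos hθ), sub_eq_add_neg, Real.exp_add]
  rw [show 2 * (v : ℝ) / (θ / 2) = 4 * v / θ by ring, neg_div (2 * θ)]
  ring

theorem gaussian_sqexp_second_moment_sum (μ : ℝ) (v : NNReal) (θ : ℝ) (hθ : 0 < θ)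
    (n : ℕ) (y r : Fin n → ℝ) :
    (∫ z, (∑ i, r i * Real.exp (-(y i - z)^2/θ))^2 ∂(gaussianReal μ v) =
      ∑ i, ∑ k, r i * r k * (1 + 4 * (v:ℝ)/θ) ^ (-(1:ℝ)/2) *
        Real.exp (-((y i + y k)/2 - μ)^2 / (θ/2 + 2 * (v:ℝ)) - (y i - y k)^2/(2*θ))) ∧
    variance (fun z => ∑ i, r i * Real.exp (-(y i - z)^2/θ)) (gaussianReal μ v) =
      (∑ i, ∑ k, r i * r k * (1 + 4 * (v:ℝ)/θ) ^ (-(1:ℝ)/2) *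
        Real.exp (-((y i + y k)/2 - μ)^2 / (θ/2 + 2 * (v:ℝ)) - (y i - y k)^2/(2*θ)))
      - (∑ i, r i * ∫ z, Real.exp (-(y i - z)^2/θ) ∂(gaussianReal μ v))^2 := by
  have hf (i : Fin n) (p : ENNReal) :
      MemLp (fun z => Real.exp (-(y i - z) ^ 2 / θ)) p (gaussianReal μ v) :=
    memLp_exp_neg_sq_div hθ.le (y i) p
  have hsecond : ∫ z, (∑ i, r i * Real.exp (-(y i - z)^2/θ))^2 ∂(gaussianReal μ v) =
      ∑ i, ∑ k, r i * r k * (1 + 4 * (v:ℝ)/θ) ^ (-(1:ℝ)/2) *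
        Real.exp (-((y i + y k)/2 - μ)^2 / (θ/2 + 2 * (v:ℝ)) - (y i - y k)^2/(2*θ)) := by
    simp_rw [integral_sq_finsetSum_const_mul _ r fun i _ => hf i 2,
      integral_exp_neg_sq_div_mul_exp_neg_sq_div_gaussianReal μ v hθ, mul_assoc]
  have hmean : ∫ z, ∑ i, r i * Real.exp (-(y i - z)^2/θ) ∂(gaussianReal μ v) =
      ∑ i, r i * ∫ z, Real.exp (-(y i - z)^2/θ) ∂(gaussianReal μ v) := by
    simp_rw [integral_finsetSum _ fun i _ => ((hf i 1).integrable le_rfl).const_mul (r i),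
      integral_const_mul]
  refine ⟨hsecond, ?_⟩
  rw [variance_eq_sub (memLp_finsetSum _ fun i _ => (hf i 2).const_mul (r i))]
  simp only [Pi.pow_apply]
  rw [hsecond, hmean]
end
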